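/- Let m ≥ 1, c ≥ 1, and let φ : ℤ/mℤ → ℂ satisfy Condition H(c): ‖φ‖_∞ ≤ c and |C(φ,a)| ≤ c√m for all a outside a set D with |D| ≤ c. Then for every interval I ⊆ ℤ/mℤ with |I| > √m, one has |∑_{n∈I} φ(n)| ≤ 6·c^{4/3}·|I|·(√m / |I|)^{1/3}. -/

import Mathlib

/-!
Shifting an interval by `t` changes the sum of `φ` over it by at most `2tc`, so averaging over
the shifts `t < H` bounds `H · |∑_I φ|` by `∑_{t<H} |∑_{n∈I} φ(n+t)| + cH²`. By Cauchy–Schwarz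
and the expansion `∑_τ |∑_{n∈I} φ(n+τ)|² = ∑_{x,y∈I} C(φ, y-x)`, the square of that sum is at
most `H` times `∑_{x,y∈I} |C(φ, y-x)| ≤ c³|I|m + c|I|²√m ≤ 2c³|I|²√m`: for each `x` at most
`|D| ≤ c` differences `y - x` are exceptional, and there only the trivial bound `c²m` holds.
The choice `H = ⌈(c|I|²√m)^{1/3}⌉` balances the two terms; when it would exceed `|I|/6`, the
trivial bound `c|I|` is already good enough.
-/

open Finset

/-- An interval in `ZMod m`: the injective reduction mod `m` of an interval of
consecutive integers. -/
def IsInterval {m : ℕ} (I : Finset (ZMod m)) : Prop :=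
  ∃ a b : ℤ, Set.InjOn (Int.cast : ℤ → ZMod m) (Finset.Icc a b : Set ℤ) ∧
    I = (Finset.Icc a b).image (Int.cast : ℤ → ZMod m)

/-- The additive autocorrelation of `φ` at shift `a`. -/
noncomputable def corr {m : ℕ} [NeZero m] (φ : ZMod m → ℂ) (a : ZMod m) : ℂ :=
  ∑ x : ZMod m, φ x * (starRingEnd ℂ) (φ (x + a))

theorem norm_sum_sub_sum_le_card_sdiff_mul {α E : Type*} [DecidableEq α]
    [SeminormedAddCommGroup E] {f : α → E} {c : ℝ} (hf : ∀ x, ‖f x‖ ≤ c) (s t : Finset α) :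
    ‖∑ x ∈ s, f x - ∑ x ∈ t, f x‖ ≤ (#(s \ t) + #(t \ s)) * c := by
  rw [← sum_sdiff_sub_sum_sdiff, add_mul]
  refine (norm_sub_le _ _).trans (add_le_add ?_ ?_) <;>
    simpa using norm_sum_le_of_le _ fun x _ => hf x

theorem Int.card_Icc_sdiff_Icc_add_le (a b : ℤ) (t : ℕ) :
    #(Icc a b \ Icc (a + t) (b + t)) ≤ t := by
  calc #(Icc a b \ Icc (a + t) (b + t)) ≤ #(Ico a (a + t)) := by
        refine card_le_card fun x hx => ?_
        simp only [mem_sdiff, mem_Icc, mem_Ico] at hx ⊢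
        omega
    _ = t := by simp

theorem Int.card_Icc_add_sdiff_Icc_le (a b : ℤ) (t : ℕ) :
    #(Icc (a + t) (b + t) \ Icc a b) ≤ t := by
  calc #(Icc (a + t) (b + t) \ Icc a b) ≤ #(Ioc b (b + t)) := by
        refine card_le_card fun x hx => ?_
        simp only [mem_sdiff, mem_Icc, mem_Ioc] at hx ⊢
        omega
    _ = t := by simp

namespace IsInterval

variable {m : ℕ} {E : Type*} [SeminormedAddCommGroup E] {φ : ZMod m → E} {c : ℝ}
  {I : Finset (ZMod m)}

theorem norm_sum_sub_sum_add_le (hφ : ∀ x, ‖φ x‖ ≤ c) (hI : IsInterval I) (t : ℕ) :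
    ‖∑ n ∈ I, φ n - ∑ n ∈ I, φ (n + t)‖ ≤ 2 * t * c := by
  obtain ⟨a, b, hinj, rfl⟩ := hI
  have hshift : ∑ n ∈ Icc a b, φ ((n : ZMod m) + t) = ∑ n ∈ Icc (a + t) (b + t), φ n := by
    rw [← map_add_right_Icc, sum_map]
    simp
  rw [sum_image hinj, sum_image hinj, hshift]
  have hcard : (#(Icc a b \ Icc (a + t) (b + t)) + #(Icc (a + t) (b + t) \ Icc a b) : ℝ) ≤
      2 * t := by
    have := Int.card_Icc_sdiff_Icc_add_le a b t
    have := Int.card_Icc_add_sdiff_Icc_le a b t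
    norm_cast
    omega
  calc _ ≤ (#(Icc a b \ Icc (a + t) (b + t)) + #(Icc (a + t) (b + t) \ Icc a b)) * c :=
        norm_sum_sub_sum_le_card_sdiff_mul (f := fun n : ℤ => φ n) (fun n => hφ n) _ _
    _ ≤ 2 * t * c := by gcongr; exact (norm_nonneg _).trans (hφ 0)

theorem mul_norm_sum_le (hφ : ∀ x, ‖φ x‖ ≤ c) (hI : IsInterval I) (H : ℕ) :
    H * ‖∑ n ∈ I, φ n‖ ≤ ∑ t ∈ range H, ‖∑ n ∈ I, φ (n + t)‖ + c * H ^ 2 := by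
  have hc : 0 ≤ c := (norm_nonneg _).trans (hφ 0)
  have gauss : ∑ t ∈ range H, 2 * (t : ℝ) * c ≤ c * H ^ 2 := by
    have h := congrArg (Nat.cast : ℕ → ℝ) (sum_range_id_mul_two H)
    push_cast at h
    rw [← sum_mul, ← mul_sum, mul_comm 2, h]
    rcases H with _ | H <;> push_cast <;> nlinarith
  calc H * ‖∑ n ∈ I, φ n‖ = ∑ t ∈ range H, ‖∑ n ∈ I, φ n‖ := by simp
    _ ≤ ∑ t ∈ range H, (‖∑ n ∈ I, φ (n + t)‖ + 2 * t * c) := by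
        gcongr with t
        exact (norm_le_norm_add_norm_sub' _ _).trans
          (by gcongr; exact hI.norm_sum_sub_sum_add_le hφ t)
    _ ≤ ∑ t ∈ range H, ‖∑ n ∈ I, φ (n + t)‖ + c * H ^ 2 := by
        rw [sum_add_distrib]; gcongr

end IsInterval

theorem Real.rpow_one_third_pow_three {x : ℝ} (hx : 0 ≤ x) : (x ^ ((1 : ℝ) / 3)) ^ 3 = x := by
  rw [← Real.rpow_natCast, ← Real.rpow_mul hx]
  norm_num

theorem ZMod.sum_range_natCast_le_sum {m : ℕ} [NeZero m] {H : ℕ} (hH : H ≤ m)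
    {F : ZMod m → ℝ} (hF : ∀ τ, 0 ≤ F τ) : ∑ t ∈ range H, F t ≤ ∑ τ, F τ := by
  have hinj : Set.InjOn (Nat.cast : ℕ → ZMod m) (range H) := fun t ht u hu h => by
    simpa [ZMod.val_natCast_of_lt ((mem_range.1 ht).trans_le hH),
      ZMod.val_natCast_of_lt ((mem_range.1 hu).trans_le hH)] using congrArg ZMod.val h
  rw [← sum_image hinj]
  exact sum_le_sum_of_subset_of_nonneg (subset_univ _) fun τ _ _ => hF τ

section Correlation

variable {m : ℕ} [NeZero m]

def ConditionH (c : ℝ) (φ : ZMod m → ℂ) : Prop :=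
  (∀ x, ‖φ x‖ ≤ c) ∧
    ∃ D : Finset (ZMod m), (#D : ℝ) ≤ c ∧ ∀ a, a ∉ D → ‖corr φ a‖ ≤ c * √m

variable (φ : ZMod m → ℂ)

theorem sum_mul_conj_sum_add_eq_sum_corr (I : Finset (ZMod m)) :
    ∑ τ, (∑ n ∈ I, φ (n + τ)) * starRingEnd ℂ (∑ n ∈ I, φ (n + τ)) =
      ∑ x ∈ I, ∑ y ∈ I, corr φ (y - x) := by
  simp_rw [map_sum, sum_mul_sum]
  rw [sum_comm]
  refine sum_congr rfl fun x _ => ?_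
  rw [sum_comm]
  refine sum_congr rfl fun y _ => ?_
  refine Fintype.sum_equiv (Equiv.addLeft x) _ _ fun τ => ?_
  rw [Equiv.coe_addLeft, show x + τ + (y - x) = y + τ by abel]

theorem sum_norm_sq_sum_add_le (I : Finset (ZMod m)) :
    ∑ τ, ‖∑ n ∈ I, φ (n + τ)‖ ^ 2 ≤ ∑ x ∈ I, ∑ y ∈ I, ‖corr φ (y - x)‖ := by
  calc ∑ τ, ‖∑ n ∈ I, φ (n + τ)‖ ^ 2
      = (∑ τ, (∑ n ∈ I, φ (n + τ)) * starRingEnd ℂ (∑ n ∈ I, φ (n + τ))).re := by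
        simp_rw [Complex.mul_conj', Complex.re_sum, ← Complex.ofReal_pow, Complex.ofReal_re]
    _ ≤ ‖∑ x ∈ I, ∑ y ∈ I, corr φ (y - x)‖ := by
        rw [sum_mul_conj_sum_add_eq_sum_corr]; exact Complex.re_le_norm _
    _ ≤ ∑ x ∈ I, ∑ y ∈ I, ‖corr φ (y - x)‖ :=
        (norm_sum_le _ _).trans (sum_le_sum fun x _ => norm_sum_le _ _)

theorem sq_sum_range_norm_sum_add_le {H : ℕ} (hH : H ≤ m) (I : Finset (ZMod m)) :
    (∑ t ∈ range H, ‖∑ n ∈ I, φ (n + t)‖) ^ 2 ≤ H * ∑ x ∈ I, ∑ y ∈ I, ‖corr φ (y - x)‖ := by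
  calc (∑ t ∈ range H, ‖∑ n ∈ I, φ (n + t)‖) ^ 2
      ≤ #(range H) * ∑ t ∈ range H, ‖∑ n ∈ I, φ (n + t)‖ ^ 2 := sq_sum_le_card_mul_sum_sq
    _ ≤ H * ∑ τ, ‖∑ n ∈ I, φ (n + τ)‖ ^ 2 := by
        rw [card_range]
        gcongr
        exact ZMod.sum_range_natCast_le_sum (F := fun τ => ‖∑ n ∈ I, φ (n + τ)‖ ^ 2) hH
          fun τ => by positivity
    _ ≤ H * ∑ x ∈ I, ∑ y ∈ I, ‖corr φ (y - x)‖ := by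
        gcongr; exact sum_norm_sq_sum_add_le φ I

variable {φ} {c : ℝ}

theorem norm_corr_le (hφ : ∀ x, ‖φ x‖ ≤ c) (a : ZMod m) : ‖corr φ a‖ ≤ c ^ 2 * m := by
  have hc : 0 ≤ c := (norm_nonneg _).trans (hφ 0)
  calc ‖corr φ a‖ ≤ ∑ x : ZMod m, c ^ 2 := by
        refine norm_sum_le_of_le _ fun x _ => ?_
        rw [norm_mul, Complex.norm_conj, sq]
        exact mul_le_mul (hφ x) (hφ (x + a)) (norm_nonneg _) hc
    _ = c ^ 2 * m := by simp [mul_comm]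

theorem ConditionH.sum_norm_corr_sub_le (h : ConditionH c φ) (s : Finset (ZMod m))
    (x : ZMod m) : ∑ y ∈ s, ‖corr φ (y - x)‖ ≤ c ^ 3 * m + #s * (c * √m) := by
  obtain ⟨hφ, D, hD, hcorr⟩ := h
  have hc : 0 ≤ c := (norm_nonneg _).trans (hφ 0)
  rw [← sum_filter_add_sum_filter_not s (fun y => y - x ∈ D)]
  gcongr
  · have hcard : (#(s.filter fun y => y - x ∈ D) : ℝ) ≤ c := by
      refine le_trans ?_ hD
      exact_mod_cast card_le_card_of_injOn (· - x) (fun y hy => (mem_filter.mp hy).2)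
        (fun y _ z _ h => sub_left_injective h)
    calc _ ≤ ∑ _y ∈ s.filter fun y => y - x ∈ D, c ^ 2 * m :=
          sum_le_sum fun y _ => norm_corr_le hφ _
      _ ≤ c * (c ^ 2 * m) := by rw [sum_const, nsmul_eq_mul]; gcongr
      _ = c ^ 3 * m := by ring
  · calc _ ≤ ∑ _y ∈ s.filter fun y => y - x ∉ D, c * √m :=
          sum_le_sum fun y hy => hcorr _ (mem_filter.mp hy).2
      _ ≤ #s * (c * √m) := by
          rw [sum_const, nsmul_eq_mul]; gcongr; exact filter_subset _ _

theorem ConditionH.sum_sum_norm_corr_sub_le (h : ConditionH c φ) (hc : 1 ≤ c)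
    {s : Finset (ZMod m)} (hs : √m ≤ #s) :
    ∑ x ∈ s, ∑ y ∈ s, ‖corr φ (y - x)‖ ≤ 2 * c ^ 3 * #s ^ 2 * √m := by
  calc _ ≤ ∑ x ∈ s, (c ^ 3 * m + #s * (c * √m)) :=
        sum_le_sum fun x _ => h.sum_norm_corr_sub_le s x
    _ = #s * (c ^ 3 * √m * √m + #s * (c * √m)) := by
        rw [sum_const, nsmul_eq_mul, mul_assoc (c ^ 3), Real.mul_self_sqrt (Nat.cast_nonneg m)]
    _ ≤ #s * (c ^ 3 * √m * #s + #s * (c ^ 3 * √m)) := by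
        gcongr; exact le_self_pow₀ hc (by norm_num)
    _ = 2 * c ^ 3 * #s ^ 2 * √m := by ring

theorem ConditionH.norm_sum_interval_le (h : ConditionH c φ) (hc : 1 ≤ c)
    {I : Finset (ZMod m)} (hI : IsInterval I) (hIbig : √m < #I) {X : ℝ} (hX : 1 ≤ X)
    (hX3 : c * #I ^ 2 * √m ≤ X ^ 3) (hXm : X ≤ m) :
    ‖∑ n ∈ I, φ n‖ ≤ 4 * (c * X) := by
  set H := ⌈X⌉₊
  have hXH : X ≤ H := Nat.le_ceil X
  have hHX : (H : ℝ) < X + 1 := Nat.ceil_lt_add_one (by linarith)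
  have hH : (0 : ℝ) < H := by linarith
  set A := ∑ t ∈ range H, ‖∑ n ∈ I, φ (n + t)‖
  have hA : A ≤ 2 * (c * X) * H := by
    refine (pow_le_pow_iff_left₀ (by positivity) (by positivity) two_ne_zero).mp ?_
    calc A ^ 2 ≤ H * ∑ x ∈ I, ∑ y ∈ I, ‖corr φ (y - x)‖ :=
          sq_sum_range_norm_sum_add_le φ (Nat.ceil_le.mpr hXm) I
      _ ≤ H * (2 * c ^ 2 * X ^ 3) := by
          gcongr
          calc _ ≤ 2 * c ^ 3 * #I ^ 2 * √m := h.sum_sum_norm_corr_sub_le hc hIbig.le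
            _ = 2 * c ^ 2 * (c * #I ^ 2 * √m) := by ring
            _ ≤ 2 * c ^ 2 * X ^ 3 := by gcongr
      _ ≤ (2 * (c * X) * H) ^ 2 := by
          have : 0 ≤ c ^ 2 * X ^ 2 * H := by positivity
          nlinarith
  have hcH : c * H ^ 2 ≤ c * H * (2 * X) := by
    rw [sq, ← mul_assoc]; gcongr; linarith
  refine le_of_mul_le_mul_left ?_ hH
  calc H * ‖∑ n ∈ I, φ n‖ ≤ A + c * H ^ 2 := IsInterval.mul_norm_sum_le h.1 hI H
    _ ≤ H * (4 * (c * X)) := by linarith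

end Correlation

theorem sliding_sum_condition_H_large (m : ℕ) [NeZero m] (c : ℝ) (hc : 1 ≤ c)
    (φ : ZMod m → ℂ) (hφ : ∀ x, ‖φ x‖ ≤ c)
    (D : Finset (ZMod m)) (hD : (D.card : ℝ) ≤ c)
    (hcorr : ∀ a : ZMod m, a ∉ D → ‖corr φ a‖ ≤ c * Real.sqrt m)
    (I : Finset (ZMod m)) (hI : IsInterval I) (hIbig : Real.sqrt m < (I.card : ℝ)) :
    ‖∑ n ∈ I, φ n‖ ≤
      6 * c ^ ((4 : ℝ) / 3) * (I.card : ℝ) *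
        (Real.sqrt m / (I.card : ℝ)) ^ ((1 : ℝ) / 3) := by
  set T : ℝ := (#I : ℝ)
  set s : ℝ := √m
  have hs : 1 ≤ s := Real.one_le_sqrt.mpr (by exact_mod_cast NeZero.one_le)
  have hT : 1 ≤ T := by linarith
  set X : ℝ := c ^ ((1 : ℝ) / 3) * T * (s / T) ^ ((1 : ℝ) / 3)
  have hrhs : 6 * c ^ ((4 : ℝ) / 3) * T * (s / T) ^ ((1 : ℝ) / 3) = 6 * (c * X) := by
    rw [show (4 : ℝ) / 3 = 1 + 1 / 3 by norm_num, Real.rpow_add (by linarith), Real.rpow_one]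
    ring
  have hX3 : X ^ 3 = c * T ^ 2 * s := by
    rw [mul_pow, mul_pow, Real.rpow_one_third_pow_three (by linarith),
      Real.rpow_one_third_pow_three (by positivity)]
    field_simp
  have hX : 1 ≤ X := by
    rw [← one_le_pow_iff_of_nonneg (by positivity) three_ne_zero, hX3]
    exact one_le_mul_of_one_le_of_one_le (one_le_mul_of_one_le_of_one_le hc (one_le_pow₀ hT)) hs
  rw [hrhs]
  by_cases hsmall : c * T ≤ 6 * (c * X)
  · refine le_trans ?_ hsmall
    simpa [mul_comm] using norm_sum_le_of_le I fun n _ => hφ n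
  have hTm : (#I : ℝ) ≤ m := by exact_mod_cast (card_le_univ I).trans_eq (ZMod.card m)
  have hcond : ConditionH c φ := ⟨hφ, D, hD, hcorr⟩
  have := hcond.norm_sum_interval_le hc hI hIbig hX hX3.ge (by nlinarith)
  linarith [mul_nonneg (by linarith : (0 : ℝ) ≤ c) (by linarith : (0 : ℝ) ≤ X)]
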